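/- arXiv:1202.2965 — 2 statements merged into one kernel-verified Lean document; each statement's English description precedes it below -/
import Mathlib

section
/- Let μ_m : [0,∞) → (0,∞) be continuously differentiable with μ_m'(s) ≥ 0 for all s ≥ 0, and suppose there exist constants 0 < m ≤ M such that μ_m(s) ≤ M and m ≤ μ_m(s) − 2·s·μ_m'(s) for all s ≥ 0. Then for every r ∈ ℝ, the function x ↦ x/μ_m(x² + r²) is strictly increasing on ℝ. -/
/-- If `μ_m : [0,∞) → (0,∞)` is continuously differentiable with
`μ_m' ≥ 0`, `μ_m ≤ M`, and `m ≤ μ_m(s) − 2 s μ_m'(s)` for all `s ≥ 0` (`0 < m ≤ M`),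
then for every `r ∈ ℝ` the function `x ↦ x/μ_m(x² + r²)` is strictly increasing on `ℝ`. -/
theorem shear_thickening_monotonicity (μ : ℝ → ℝ) (m M : ℝ)
    (hm : 0 < m) (hmM : m ≤ M)
    (hμpos : ∀ s ∈ Set.Ici (0 : ℝ), 0 < μ s)
    (hC1 : ContDiffOn ℝ 1 μ (Set.Ici 0))
    (hμ' : ∀ s ∈ Set.Ici (0 : ℝ), 0 ≤ derivWithin μ (Set.Ici 0) s)
    (hupper : ∀ s ∈ Set.Ici (0 : ℝ), μ s ≤ M)
    (hlower : ∀ s ∈ Set.Ici (0 : ℝ), m ≤ μ s - 2 * s * derivWithin μ (Set.Ici 0) s) :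
    ∀ r : ℝ, StrictMono (fun x : ℝ => x / μ (x ^ 2 + r ^ 2)) := by
  intro r
  have hdiff := hC1.differentiableOn one_ne_zero
  have key : ∀ x : ℝ, HasDerivAt (fun x : ℝ => x / μ (x ^ 2 + r ^ 2))
      ((1 * μ (x ^ 2 + r ^ 2) - x * ((2 * x) • derivWithin μ (Set.Ici 0) (x ^ 2 + r ^ 2))) /
        (μ (x ^ 2 + r ^ 2)) ^ 2) x := by
    intro x
    set s := x ^ 2 + r ^ 2 with hs
    have hs0 : s ∈ Set.Ici (0 : ℝ) := by simp only [Set.mem_Ici]; positivity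
    have hg : HasDerivAt (fun x : ℝ => x ^ 2 + r ^ 2) (2 * x) x := by
      simpa using ((hasDerivAt_pow 2 x).add_const (r ^ 2))
    have hμd : HasDerivWithinAt μ (derivWithin μ (Set.Ici 0) s) (Set.Ici 0) s :=
      (hdiff s hs0).hasDerivWithinAt
    have hcomp : HasDerivAt (μ ∘ fun x : ℝ => x ^ 2 + r ^ 2)
        ((2 * x) • derivWithin μ (Set.Ici 0) s) x :=
      hμd.scomp_hasDerivAt x hg (fun y => by simp only [Set.mem_Ici]; positivity)
    exact (hasDerivAt_id x).div hcomp (hμpos s hs0).ne'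
  apply strictMono_of_deriv_pos
  intro x
  rw [(key x).deriv]
  set s := x ^ 2 + r ^ 2 with hs
  have hs0 : s ∈ Set.Ici (0 : ℝ) := by simp only [Set.mem_Ici]; positivity
  have hx2 : x ^ 2 ≤ s := by nlinarith [sq_nonneg r]
  have h1 := hlower s hs0
  have h2 := hμ' s hs0
  have hnum : m ≤ μ s - 2 * x ^ 2 * derivWithin μ (Set.Ici 0) s := by nlinarith
  have hpos := hμpos s hs0
  have : 0 < 1 * μ s - x * ((2 * x) • derivWithin μ (Set.Ici 0) s) := by
    simp only [smul_eq_mul]; nlinarith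
  positivity
end

section
/- Let f : ℝ → ℝ be continuously differentiable and 2π-periodic with f(x) > −1 for all x, and let V = (V₁, V₂) : ℝ² → ℝ² be continuously differentiable with V(x + 2π, y) = V(x, y) for all (x,y). Suppose ∂_x V₁(x,y) + ∂_y V₂(x,y) = 0 for all (x,y) with −1 ≤ y ≤ f(x), and V₂(x, −1) = 0 for all x. Then ∫₀^{2π} (−f'(x)·V₁(x, f(x)) + V₂(x, f(x))) dx = 0. -/
/-- Partial derivative with respect to the first variable. -/
noncomputable def pdx (V : ℝ × ℝ → ℝ) (p : ℝ × ℝ) : ℝ :=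
  deriv (fun t => V (t, p.2)) p.1

/-- Partial derivative with respect to the second variable. -/
noncomputable def pdy (V : ℝ × ℝ → ℝ) (p : ℝ × ℝ) : ℝ :=
  deriv (fun t => V (p.1, t)) p.2

open MeasureTheory intervalIntegral Metric

private lemma hda_fst' {g : ℝ → ℝ × ℝ} {g' : ℝ × ℝ} {x : ℝ} (h : HasDerivAt g g' x) :
    HasDerivAt (fun x => (g x).1) g'.1 x :=
  (hasFDerivAt_fst (𝕜 := ℝ) (p := g x)).comp_hasDerivAt x h

private lemma hda_snd' {g : ℝ → ℝ × ℝ} {g' : ℝ × ℝ} {x : ℝ} (h : HasDerivAt g g' x) :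
    HasDerivAt (fun x => (g x).2) g'.2 x :=
  (hasFDerivAt_snd (𝕜 := ℝ) (p := g x)).comp_hasDerivAt x h

/-- For `f` continuously differentiable, `2π`-periodic with `f > −1`, and a
`2π`-periodic (in `x`) continuously differentiable divergence-free field `V = (V₁, V₂)`
on `{−1 ≤ y ≤ f(x)}` with `V₂(x,−1) = 0`, the flux through the graph of `f` over one
period vanishes: `∫₀^{2π} (−f'(x) V₁(x,f(x)) + V₂(x,f(x))) dx = 0`. -/
theorem flux_through_interface_vanishes (f : ℝ → ℝ) (V : ℝ × ℝ → ℝ × ℝ)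
    (hf : ContDiff ℝ 1 f) (hfper : Function.Periodic f (2 * Real.pi))
    (hfb : ∀ x, -1 < f x)
    (hV : ContDiff ℝ 1 V)
    (hVper : ∀ x y : ℝ, V (x + 2 * Real.pi, y) = V (x, y))
    (hdiv : ∀ p : ℝ × ℝ, -1 ≤ p.2 → p.2 ≤ f p.1 →
      pdx (fun q => (V q).1) p + pdy (fun q => (V q).2) p = 0)
    (hbot : ∀ x : ℝ, (V (x, -1)).2 = 0) :
    ∫ x in (0 : ℝ)..(2 * Real.pi),
      (-(deriv f x) * (V (x, f x)).1 + (V (x, f x)).2) = 0 := by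
  -- notation
  set A : ℝ × ℝ → (ℝ × ℝ) →L[ℝ] ℝ × ℝ := fderiv ℝ V with hA
  have hVdiff : Differentiable ℝ V := hV.differentiable one_ne_zero
  have hfdiff : Differentiable ℝ f := hf.differentiable one_ne_zero
  have hAcont : Continuous A := hV.continuous_fderiv one_ne_zero
  have hf'cont : Continuous (deriv f) := hf.continuous_deriv le_rfl
  have hVcont : Continuous V := hV.continuous
  have hfcont : Continuous f := hf.continuous
  -- partial derivatives in terms of the full derivative
  have hpdx : ∀ p : ℝ × ℝ, pdx (fun q => (V q).1) p = (A p (1, 0)).1 := by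
    intro p
    have hc : HasDerivAt (fun t : ℝ => ((t, p.2) : ℝ × ℝ)) ((1 : ℝ), (0 : ℝ)) p.1 :=
      (hasDerivAt_id p.1).prodMk (hasDerivAt_const p.1 p.2)
    have h : HasDerivAt (fun t => V (t, p.2)) (A p (1, 0)) p.1 := by
      simpa [Function.comp_def] using (hVdiff p).hasFDerivAt.comp_hasDerivAt p.1 hc
    exact (hda_fst' h).deriv
  have hpdy : ∀ p : ℝ × ℝ, pdy (fun q => (V q).2) p = (A p (0, 1)).2 := by
    intro p
    have hc : HasDerivAt (fun t : ℝ => ((p.1, t) : ℝ × ℝ)) ((0 : ℝ), (1 : ℝ)) p.2 :=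
      (hasDerivAt_const p.2 p.1).prodMk (hasDerivAt_id p.2)
    have h : HasDerivAt (fun t => V (p.1, t)) (A p (0, 1)) p.2 := by
      simpa [Function.comp_def] using (hVdiff p).hasFDerivAt.comp_hasDerivAt p.2 hc
    exact (hda_snd' h).deriv
  have hdiv' : ∀ p : ℝ × ℝ, -1 ≤ p.2 → p.2 ≤ f p.1 →
      (A p (1, 0)).1 + (A p (0, 1)).2 = 0 := by
    intro p h1 h2
    have := hdiv p h1 h2
    rwa [hpdx, hpdy] at this
  -- the auxiliary family
  set y : ℝ → ℝ → ℝ := fun x t => -1 + t * (f x + 1) with hy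
  set F : ℝ → ℝ → ℝ := fun x t => (f x + 1) * (V (x, y x t)).1 with hF
  set G : ℝ → ℝ → ℝ := fun x t =>
    deriv f x * (V (x, y x t)).1 + (f x + 1) * ((A (x, y x t)) (1, t * deriv f x)).1 with hG
  set W : ℝ → ℝ := fun x => ∫ t in (0:ℝ)..1, F x t with hW
  set D : ℝ → ℝ := fun x => deriv f x * (V (x, f x)).1 - (V (x, f x)).2 with hD
  -- x-derivative of F in x
  have hFx : ∀ x t : ℝ, HasDerivAt (fun x => F x t) (G x t) x := by
    intro x t
    have hfd : HasDerivAt f (deriv f x) x := (hfdiff x).hasDerivAt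
    have h1 : HasDerivAt (fun x => f x + 1) (deriv f x) x := hfd.add_const 1
    have hyd : HasDerivAt (fun x => y x t) (t * deriv f x) x := by
      simpa [hy] using (h1.const_mul t).const_add (-1)
    have hc : HasDerivAt (fun x => ((x, y x t) : ℝ × ℝ)) ((1 : ℝ), t * deriv f x) x :=
      (hasDerivAt_id x).prodMk hyd
    have hcomp : HasDerivAt (fun x => V (x, y x t)) (A (x, y x t) (1, t * deriv f x)) x :=
      (hVdiff (x, y x t)).hasFDerivAt.comp_hasDerivAt x hc
    have := h1.mul (hda_fst' hcomp)
    simpa [hF, mul_comm, Pi.mul_def] using this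
  -- joint continuity of G
  have hGcont : Continuous (fun q : ℝ × ℝ => G q.1 q.2) := by
    have hyq : Continuous (fun q : ℝ × ℝ => ((q.1, y q.1 q.2) : ℝ × ℝ)) := by
      apply Continuous.prodMk continuous_fst
      exact continuous_const.add (continuous_snd.mul ((hfcont.comp continuous_fst).add
        continuous_const))
    have h1 : Continuous (fun q : ℝ × ℝ => (V (q.1, y q.1 q.2)).1) :=
      (hVcont.comp hyq).fst
    have h2 : Continuous (fun q : ℝ × ℝ => (A (q.1, y q.1 q.2)
        ((1 : ℝ), q.2 * deriv f q.1)).1) := by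
      apply Continuous.fst
      exact (hAcont.comp hyq).clm_apply
        (continuous_const.prodMk (continuous_snd.mul (hf'cont.comp continuous_fst)))
    exact ((hf'cont.comp continuous_fst).mul h1).add
      (((hfcont.comp continuous_fst).add continuous_const).mul h2)
  -- W has derivative ∫ G at each point
  have hWderiv : ∀ x₀ : ℝ, HasDerivAt W (∫ t in (0:ℝ)..1, G x₀ t) x₀ := by
    intro x₀
    obtain ⟨C, hC⟩ := (((isCompact_Icc (a := x₀ - 1) (b := x₀ + 1)).prod
      (isCompact_Icc (a := (0:ℝ)) (b := 1)))).exists_bound_of_continuousOn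
      (hGcont.continuousOn)
    have key := intervalIntegral.hasDerivAt_integral_of_dominated_loc_of_deriv_le
      (F := F) (F' := G) (x₀ := x₀) (a := 0) (b := 1) (bound := fun _ => C)
      (μ := volume) (s := Metric.ball x₀ 1) (Metric.ball_mem_nhds x₀ one_pos)
      (Filter.Eventually.of_forall fun x => (Continuous.aestronglyMeasurable (by
        apply Continuous.mul (continuous_const)
        exact (hVcont.comp (continuous_const.prodMk
          (continuous_const.add (continuous_id.mul continuous_const)))).fst)))
      (by
        apply Continuous.intervalIntegrable
        apply Continuous.mul continuous_const
        exact (hVcont.comp (continuous_const.prodMk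
          (continuous_const.add (continuous_id.mul continuous_const)))).fst)
      ((hGcont.comp (continuous_const.prodMk continuous_id)).aestronglyMeasurable)
      (Filter.Eventually.of_forall fun t ht x hx => by
        have hxI : x ∈ Set.Icc (x₀ - 1) (x₀ + 1) := by
          have := abs_lt.1 (by simpa [Real.dist_eq] using hx)
          constructor <;> linarith [this.1, this.2]
        have htI : t ∈ Set.Icc (0:ℝ) 1 := by
          rw [Set.uIoc_of_le (by norm_num : (0:ℝ) ≤ 1)] at ht
          exact ⟨ht.1.le, ht.2⟩
        exact hC (x, t) (Set.mk_mem_prod hxI htI))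
      (intervalIntegrable_const)
      (Filter.Eventually.of_forall fun t ht x hx => hFx x t)
    exact key.2
  -- compute ∫ G x t dt via FTC in t, using the divergence-free condition
  have hGint : ∀ x : ℝ, (∫ t in (0:ℝ)..1, G x t) = D x := by
    intro x
    have hφ : (0:ℝ) < f x + 1 := by linarith [hfb x]
    set g : ℝ → ℝ := fun t => t * deriv f x * (V (x, y x t)).1 - (V (x, y x t)).2 with hg
    have hgd : ∀ t ∈ Set.uIcc (0:ℝ) 1, HasDerivAt g (G x t) t := by
      intro t ht
      rw [Set.uIcc_of_le (by norm_num : (0:ℝ) ≤ 1)] at ht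
      have hyd : HasDerivAt (fun t => y x t) (f x + 1) t := by
        simpa [hy] using ((hasDerivAt_id t).mul_const (f x + 1)).const_add (-1)
      have hc : HasDerivAt (fun t => ((x, y x t) : ℝ × ℝ)) ((0 : ℝ), f x + 1) t :=
        (hasDerivAt_const t x).prodMk hyd
      have hcomp : HasDerivAt (fun t => V (x, y x t)) (A (x, y x t) (0, f x + 1)) t :=
        (hVdiff (x, y x t)).hasFDerivAt.comp_hasDerivAt t hc
      have h1 : HasDerivAt (fun t : ℝ => t * deriv f x) (deriv f x) t := by
        simpa using (hasDerivAt_id t).mul_const (deriv f x)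
      have hgd' := (h1.mul (hda_fst' hcomp)).sub (hda_snd' hcomp)
      -- identify the derivative value with G x t using linearity and divergence-freeness
      have hylo : -1 ≤ y x t := by
        have : 0 ≤ t * (f x + 1) := mul_nonneg ht.1 hφ.le
        simp only [hy]; linarith
      have hyhi : y x t ≤ f x := by
        have : t * (f x + 1) ≤ 1 * (f x + 1) := mul_le_mul_of_nonneg_right ht.2 hφ.le
        simp only [hy]; linarith
      have hdv := hdiv' (x, y x t) hylo hyhi
      have lin1 : A (x, y x t) ((0:ℝ), f x + 1) = (f x + 1) • A (x, y x t) ((0:ℝ), (1:ℝ)) := by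
        rw [← ContinuousLinearMap.map_smul]; congr 1; simp [Prod.smul_def]
      have lin2 : A (x, y x t) ((1:ℝ), t * deriv f x)
          = A (x, y x t) ((1:ℝ), (0:ℝ)) + (t * deriv f x) • A (x, y x t) ((0:ℝ), (1:ℝ)) := by
        rw [← ContinuousLinearMap.map_smul, ← ContinuousLinearMap.map_add]; congr 1; simp [Prod.smul_def]
      have : deriv f x * (V (x, y x t)).1
            + t * deriv f x * (A (x, y x t) ((0:ℝ), f x + 1)).1
            - (A (x, y x t) ((0:ℝ), f x + 1)).2 = G x t := by
        simp only [hG, lin1, lin2]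
        simp only [Prod.smul_def, Prod.fst_add, Prod.snd_add, smul_eq_mul, Prod.fst]
        nlinarith [hdv]
      rw [← this]
      exact hgd'
    have hGicont : Continuous (fun t => G x t) :=
      hGcont.comp (continuous_const.prodMk continuous_id)
    have := intervalIntegral.integral_eq_sub_of_hasDerivAt hgd (hGicont.intervalIntegrable 0 1)
    rw [this]
    have hy1 : y x 1 = f x := by simp [hy]
    have hy0 : y x 0 = -1 := by simp [hy]
    simp [hg, hy1, hy0, hbot x, hD]
  -- W is periodic over one period
  have hWper : W (2 * Real.pi) = W 0 := by
    simp only [hW]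
    congr 1
    funext t
    have hf2 : f (2 * Real.pi) = f 0 := by simpa using hfper 0
    have hV2 : ∀ z : ℝ, V (2 * Real.pi, z) = V (0, z) := fun z => by simpa using hVper 0 z
    simp [hF, hy, hf2, hV2]
  -- conclude
  have hint : ∀ x : ℝ, -(deriv f x) * (V (x, f x)).1 + (V (x, f x)).2 = -D x := by
    intro x; simp [hD]; ring
  have hDcont : Continuous D := by
    have h1 : Continuous (fun x : ℝ => V (x, f x)) :=
      hVcont.comp (continuous_id.prodMk hfcont)
    exact (hf'cont.mul h1.fst).sub h1.snd
  have hWD : ∀ x : ℝ, HasDerivAt W (D x) x := by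
    intro x; rw [← hGint x]; exact hWderiv x
  have hftc : (∫ x in (0:ℝ)..(2 * Real.pi), D x) = W (2 * Real.pi) - W 0 :=
    intervalIntegral.integral_eq_sub_of_hasDerivAt (fun x _ => hWD x)
      (hDcont.intervalIntegrable 0 (2 * Real.pi))
  calc ∫ x in (0:ℝ)..(2 * Real.pi), (-(deriv f x) * (V (x, f x)).1 + (V (x, f x)).2)
      = ∫ x in (0:ℝ)..(2 * Real.pi), -D x := by simp only [hint]
    _ = -(W (2 * Real.pi) - W 0) := by rw [intervalIntegral.integral_neg, hftc]
    _ = 0 := by rw [hWper]; ring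
end
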